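/- Let M be noncompact. Assume (A2)–(A3) for some t₀ > 0, the ground state data with the spectral-gap kernel estimate (constants C₀, γ), with φ₀ and ψ₀ strictly positive everywhere on M (N = ∅). Let {K_t : t ≥ t₀} be an exhausting family of compact sets, and let η : [t̃₀,∞) → [t₀,∞) be an increasing function with η(t) → ∞ as t → ∞ and e^{γ t}·min(inf_{x ∈ K_{η(t)}} φ₀(x), inf_{x ∈ K_{η(t)}} ψ₀(x)) ≥ 1 for all t ≥ t̃₀. If Z(t₁) < ∞ for some t₁ ≥ t₀, then both semigroups are pGSD for the exhausting family {K_{η(t)}}: there exist C > 0 and T > 0 such that U_t 1_M(x) ≤ C e^{−λ₀ t} φ₀(x) and U_t* 1_M(x) ≤ C e^{−λ₀ t} ψ₀(x) for all t ≥ T and all x ∈ K_{η(t)}. -/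

import Mathlib

open MeasureTheory Real Set Filter Topology
open scoped ENNReal NNReal

noncomputable section

variable {M : Type*}

/-- The integral operator `U_t` associated with the kernel `u`:
`U_t f (x) = ∫ u_t(x,y) f(y) μ(dy)`. -/
def Uop [MeasurableSpace M] (μ : Measure M) (u : ℝ → M → M → ℝ)
    (t : ℝ) (f : M → ℝ) (x : M) : ℝ :=
  ∫ y, u t x y * f y ∂μ

/-- The adjoint integral operator `U_t^*`:
`U_t^* g (y) = ∫ u_t(x,y) g(x) μ(dx)`. -/
def Ustar [MeasurableSpace M] (μ : Measure M) (u : ℝ → M → M → ℝ)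
    (t : ℝ) (g : M → ℝ) (y : M) : ℝ :=
  ∫ x, u t x y * g x ∂μ

/-- The heat content `Z(t) = ∬ u_t(x,y) μ(dx) μ(dy)`. -/
def heatContent [MeasurableSpace M] (μ : Measure M) (u : ℝ → M → M → ℝ) (t : ℝ) : ℝ≥0∞ :=
  ∫⁻ x, ∫⁻ y, ENNReal.ofReal (u t x y) ∂μ ∂μ

/-- An exhausting family of compact sets `{K_t : t ≥ t₀}`. -/
def ExhaustingFamily [TopologicalSpace M] (t₀ : ℝ) (K : ℝ → Set M) : Prop :=
  (∀ t, t₀ ≤ t → IsCompact (K t)) ∧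
  (∀ s t, t₀ ≤ s → s < t → K s ⊆ K t) ∧
  (⋃ t ∈ Set.Ici t₀, K t) = Set.univ ∧
  (∀ A : Set M, IsCompact A → ∃ t, t₀ ≤ t ∧ A ⊆ K t)

/-- `m̄` is a quasi-stationary (probability) measure of the semigroup `{U_t}`:
for every `t > 0` and every bounded Borel `f`, `m̄(U_t 1) > 0` and
`m̄(U_t f)/m̄(U_t 1) = m̄(f)`. -/
def IsQSM [MeasurableSpace M] (μ : Measure M) (u : ℝ → M → M → ℝ) (mb : Measure M) : Prop :=
  ∀ t : ℝ, 0 < t → ∀ f : M → ℝ, Measurable f → (∃ C, ∀ x, |f x| ≤ C) →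
    0 < (∫ x, Uop μ u t (fun _ => (1 : ℝ)) x ∂mb) ∧
    (∫ x, Uop μ u t f x ∂mb) / (∫ x, Uop μ u t (fun _ => (1 : ℝ)) x ∂mb) = ∫ x, f x ∂mb

/-- Quasi-stationarity for the adjoint semigroup `{U_t^*}`. -/
def IsQSMstar [MeasurableSpace M] (μ : Measure M) (u : ℝ → M → M → ℝ) (mb : Measure M) : Prop :=
  ∀ t : ℝ, 0 < t → ∀ f : M → ℝ, Measurable f → (∃ C, ∀ x, |f x| ≤ C) →
    0 < (∫ x, Ustar μ u t (fun _ => (1 : ℝ)) x ∂mb) ∧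
    (∫ x, Ustar μ u t f x ∂mb) / (∫ x, Ustar μ u t (fun _ => (1 : ℝ)) x ∂mb) = ∫ x, f x ∂mb


/-
Split `t = s + t₁`. By Chapman–Kolmogorov, `U_t 1(x) = ∫ u_s(x,z) U_{t₁} 1(z) μ(dz)`, and the
spectral-gap estimate at time `s` bounds `u_s(x,z)` by `e^{-λ s}(Λ⁻¹ φ₀(x) ψ₀(z) + C₀ e^{-γ s})`.
Hence `U_t 1(x) ≤ e^{-λ s}(Λ⁻¹ φ₀(x) ∫ ψ₀ U_{t₁}1 dμ + C₀ e^{-γ s} Z(t₁))`, where both integrals are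
finite because `ψ₀` is bounded and `Z(t₁) < ∞`. This holds for `μ`-a.e. `x`, hence for every `x`
by the strong Feller property. Where `e^{-γ t} ≤ φ₀(x)`, which the hypothesis on `η` guarantees on
`K_{η(t)}`, the second term is at most a constant times `e^{-λ t} φ₀(x)`. The adjoint semigroup is
the semigroup of the transposed kernel, to which the same bound applies with `φ₀` and `ψ₀`
exchanged.
-/

lemma Continuous.le_of_ae_le {X Y : Type*} [TopologicalSpace X] [MeasurableSpace X]
    {μ : Measure X} [μ.IsOpenPosMeasure] [TopologicalSpace Y] [LinearOrder Y]
    [OrderClosedTopology Y] {f g : X → Y} (hf : Continuous f) (hg : Continuous g)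
    (h : f ≤ᵐ[μ] g) : f ≤ g := by
  intro x
  by_contra hx
  exact (isOpen_lt hg hf).measure_ne_zero μ ⟨x, not_le.mp hx⟩
    (measure_mono_null (fun y hy => not_le.mpr hy) (ae_iff.mp h))

lemma le_exp_neg_mul_add_of_abs_exp_mul_sub_le {a k p e : ℝ} (h : |exp a * k - p| ≤ e) :
    k ≤ exp (-a) * p + exp (-a) * e := by
  have hk : k = exp (-a) * (exp a * k) := by
    rw [← mul_assoc, ← exp_add, neg_add_cancel, exp_zero, one_mul]
  rw [hk, ← mul_add]
  gcongr
  linarith [(abs_le.mp h).2]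

lemma inv_le_of_one_le_mul_csInf_image {α : Type*} {f : α → ℝ} {S : Set α} {c : ℝ} {x : α}
    (hc : 0 < c) (hf : ∀ x, 0 ≤ f x) (h : 1 ≤ c * sInf (f '' S)) (hx : x ∈ S) :
    c⁻¹ ≤ f x := by
  rw [inv_le_iff_one_le_mul₀' hc]
  exact h.trans (by gcongr; exact csInf_le ⟨0, forall_mem_image.2 fun y _ => hf y⟩ ⟨x, hx, rfl⟩)

section Composition

variable {α : Type*} [MeasurableSpace α] {μ : Measure α}

lemma ofReal_integral_le_lintegral_ofReal {f : α → ℝ} (hf : ∀ x, 0 ≤ f x) :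
    ENNReal.ofReal (∫ x, f x ∂μ) ≤ ∫⁻ x, ENNReal.ofReal (f x) ∂μ := by
  refine (ENNReal.ofReal_le_ofReal (le_abs_self _)).trans ?_
  rw [← Real.enorm_eq_ofReal_abs]
  exact (enorm_integral_le_lintegral_enorm f).trans_eq
    (lintegral_congr fun x => Real.enorm_of_nonneg (hf x))

lemma lintegral_ofReal_integral_mul_le [SFinite μ] {v : α → ℝ} {w : α → α → ℝ}
    (hv : Measurable v) (hw : Measurable (Function.uncurry w)) (hv0 : ∀ z, 0 ≤ v z)
    (hw0 : ∀ z y, 0 ≤ w z y) :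
    ∫⁻ y, ENNReal.ofReal (∫ z, v z * w z y ∂μ) ∂μ ≤
      ∫⁻ z, ENNReal.ofReal (v z) * ∫⁻ y, ENNReal.ofReal (w z y) ∂μ ∂μ :=
  calc ∫⁻ y, ENNReal.ofReal (∫ z, v z * w z y ∂μ) ∂μ
      ≤ ∫⁻ y, ∫⁻ z, ENNReal.ofReal (v z * w z y) ∂μ ∂μ :=
        lintegral_mono fun y =>
          ofReal_integral_le_lintegral_ofReal fun z => mul_nonneg (hv0 z) (hw0 z y)
    _ = ∫⁻ z, ∫⁻ y, ENNReal.ofReal (v z * w z y) ∂μ ∂μ :=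
        lintegral_lintegral_swap
          ((hv.comp measurable_snd).mul (hw.comp measurable_swap)).ennreal_ofReal.aemeasurable
    _ = ∫⁻ z, ENNReal.ofReal (v z) * ∫⁻ y, ENNReal.ofReal (w z y) ∂μ ∂μ := by
        refine lintegral_congr fun z => ?_
        rw [← lintegral_const_mul _ hw.of_uncurry_left.ennreal_ofReal]
        exact lintegral_congr fun y => ENNReal.ofReal_mul (hv0 z)

lemma lintegral_ofReal_mul_le_of_ae_le {v g : α → ℝ} {L : α → ℝ≥0∞} (hg : Measurable g)
    (hL : Measurable L) {c b : ℝ} (hc : 0 ≤ c) (hv : ∀ᵐ z ∂μ, v z ≤ c * g z + b) :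
    ∫⁻ z, ENNReal.ofReal (v z) * L z ∂μ ≤
      ENNReal.ofReal c * ∫⁻ z, ENNReal.ofReal (g z) * L z ∂μ
        + ENNReal.ofReal b * ∫⁻ z, L z ∂μ := by
  have hgL : Measurable fun z => ENNReal.ofReal (g z) * L z := hg.ennreal_ofReal.mul hL
  calc ∫⁻ z, ENNReal.ofReal (v z) * L z ∂μ
      ≤ ∫⁻ z, ENNReal.ofReal c * (ENNReal.ofReal (g z) * L z) + ENNReal.ofReal b * L z ∂μ := by
        refine lintegral_mono_ae (hv.mono fun z hz => ?_)
        calc ENNReal.ofReal (v z) * L z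
            ≤ (ENNReal.ofReal c * ENNReal.ofReal (g z) + ENNReal.ofReal b) * L z := by
              gcongr
              rw [← ENNReal.ofReal_mul hc]
              exact (ENNReal.ofReal_le_ofReal hz).trans ENNReal.ofReal_add_le
          _ = _ := by ring
    _ = _ := by
        rw [lintegral_add_left (hgL.const_mul _), lintegral_const_mul _ hgL,
          lintegral_const_mul _ hL]

lemma ae_swap_of_ae_prod [SFinite μ] {p : α × α → Prop} (h : ∀ᵐ q ∂μ.prod μ, p q) :
    ∀ᵐ q ∂μ.prod μ, p q.swap :=
  Measure.measurePreserving_swap.quasiMeasurePreserving.ae h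

end Composition

section Kernel

def ChapmanKolmogorov [MeasurableSpace M] (μ : Measure M) (u : ℝ → M → M → ℝ) : Prop :=
  ∀ s t : ℝ, 0 < s → 0 < t → ∀ x y, u (s + t) x y = ∫ z, u s x z * u t z y ∂μ

def weightedMass [MeasurableSpace M] (μ : Measure M) (u : ℝ → M → M → ℝ) (t : ℝ) (g : M → ℝ) :
    ℝ≥0∞ :=
  ∫⁻ z, ENNReal.ofReal (g z) * ∫⁻ y, ENNReal.ofReal (u t z y) ∂μ ∂μ

def transposeKernel (u : ℝ → M → M → ℝ) : ℝ → M → M → ℝ := fun t x y => u t y x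

variable [MeasurableSpace M] {μ : Measure M} {u : ℝ → M → M → ℝ}

lemma weightedMass_lt_top [SFinite μ] {t C : ℝ} {g : M → ℝ}
    (hu : Measurable (Function.uncurry (u t))) (hg : ∀ x, g x ≤ C)
    (hZ : heatContent μ u t < ⊤) : weightedMass μ u t g < ⊤ := by
  have hle : weightedMass μ u t g ≤ ENNReal.ofReal C * heatContent μ u t := by
    have hL : Measurable fun z => ∫⁻ y, ENNReal.ofReal (u t z y) ∂μ :=
      hu.ennreal_ofReal.lintegral_prod_right'
    rw [heatContent, ← lintegral_const_mul _ hL]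
    exact lintegral_mono fun z => by gcongr; exact hg z
  exact hle.trans_lt (ENNReal.mul_lt_top ENNReal.ofReal_lt_top hZ)

lemma Uop_one_eq_toReal_lintegral {t : ℝ} (hu0 : ∀ x y, 0 ≤ u t x y)
    (hu : Measurable (Function.uncurry (u t))) (x : M) :
    Uop μ u t (fun _ => 1) x = (∫⁻ y, ENNReal.ofReal (u t x y) ∂μ).toReal := by
  simp only [Uop, mul_one]
  exact integral_eq_lintegral_of_nonneg_ae (.of_forall (hu0 x))
    hu.of_uncurry_left.aestronglyMeasurable

lemma ae_Uop_one_le [SFinite μ] {s t₁ c b : ℝ} {phi psi : M → ℝ}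
    (hu0 : ∀ t, 0 < t → ∀ x y, 0 ≤ u t x y)
    (hu : ∀ t, 0 < t → Measurable (Function.uncurry (u t))) (hCK : ChapmanKolmogorov μ u)
    (hs : 0 < s) (ht₁ : 0 < t₁) (hphi0 : ∀ x, 0 ≤ phi x) (hpsi : Measurable psi)
    (hc : 0 ≤ c) (hb : 0 ≤ b) (hbound : ∀ᵐ q ∂μ.prod μ, u s q.1 q.2 ≤ c * phi q.1 * psi q.2 + b)
    (hB : weightedMass μ u t₁ psi < ⊤) (hZ : heatContent μ u t₁ < ⊤) :
    ∀ᵐ x ∂μ, Uop μ u (s + t₁) (fun _ => 1) x ≤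
      c * phi x * (weightedMass μ u t₁ psi).toReal + b * (heatContent μ u t₁).toReal := by
  have hL : Measurable fun z => ∫⁻ y, ENNReal.ofReal (u t₁ z y) ∂μ :=
    (hu t₁ ht₁).ennreal_ofReal.lintegral_prod_right'
  filter_upwards [Measure.ae_ae_of_ae_prod hbound] with x hx
  have hlin : ∫⁻ y, ENNReal.ofReal (u (s + t₁) x y) ∂μ ≤
      ENNReal.ofReal (c * phi x) * weightedMass μ u t₁ psi
        + ENNReal.ofReal b * heatContent μ u t₁ := by
    simp_rw [hCK s t₁ hs ht₁ x]
    exact (lintegral_ofReal_integral_mul_le (hu s hs).of_uncurry_left (hu t₁ ht₁) (hu0 s hs x)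
      (hu0 t₁ ht₁)).trans (lintegral_ofReal_mul_le_of_ae_le hpsi hL (mul_nonneg hc (hphi0 x)) hx)
  rw [Uop_one_eq_toReal_lintegral (hu0 _ (add_pos hs ht₁)) (hu _ (add_pos hs ht₁))]
  refine (ENNReal.toReal_mono (by finiteness) hlin).trans_eq ?_
  rw [ENNReal.toReal_add (by finiteness) (by finiteness), ENNReal.toReal_mul, ENNReal.toReal_mul,
    ENNReal.toReal_ofReal (mul_nonneg hc (hphi0 x)), ENNReal.toReal_ofReal hb]

theorem exists_Uop_one_le_of_spectral_gap [TopologicalSpace M] [SFinite μ] [μ.IsOpenPosMeasure]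
    {lam κ C₀ γ s₀ t₁ Cψ : ℝ} {phi psi : M → ℝ}
    (hu0 : ∀ t, 0 < t → ∀ x y, 0 ≤ u t x y)
    (hu : ∀ t, 0 < t → Measurable (Function.uncurry (u t))) (hCK : ChapmanKolmogorov μ u)
    (hcont : ∀ t, 0 < t → Continuous (Uop μ u t fun _ => 1))
    (hphi : Continuous phi) (hphi0 : ∀ x, 0 ≤ phi x) (hpsi : Measurable psi)
    (hpsi_le : ∀ x, psi x ≤ Cψ) (hκ : 0 ≤ κ) (hC₀ : 0 ≤ C₀)
    (hgap : ∀ t, s₀ < t → ∀ᵐ q ∂μ.prod μ,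
      |exp (lam * t) * u t q.1 q.2 - κ * (phi q.1 * psi q.2)| ≤ C₀ * exp (-(γ * t)))
    (ht₁ : 0 < t₁) (hZ : heatContent μ u t₁ < ⊤) :
    ∃ C, 0 < C ∧ ∃ T, ∀ t, T ≤ t → ∀ x, exp (-(γ * t)) ≤ phi x →
      Uop μ u t (fun _ => 1) x ≤ C * exp (-(lam * t)) * phi x := by
  set B := (weightedMass μ u t₁ psi).toReal
  set Z := (heatContent μ u t₁).toReal
  have hB : 0 ≤ B := ENNReal.toReal_nonneg
  have hZ' : 0 ≤ Z := ENNReal.toReal_nonneg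
  refine ⟨exp (lam * t₁) * (κ * B + C₀ * exp (γ * t₁) * Z) + 1, by positivity,
    t₁ + max s₀ 0 + 1, fun t ht x hx => ?_⟩
  obtain ⟨s, rfl⟩ : ∃ s, t = s + t₁ := ⟨t - t₁, by ring⟩
  have hs₀ : s₀ < s := by linarith [le_max_left s₀ 0]
  have hs : 0 < s := by linarith [le_max_right s₀ 0]
  have hbound : ∀ᵐ q ∂μ.prod μ, u s q.1 q.2 ≤
      exp (-(lam * s)) * κ * phi q.1 * psi q.2 + exp (-(lam * s)) * (C₀ * exp (-(γ * s))) :=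
    (hgap s hs₀).mono fun q hq =>
      (le_exp_neg_mul_add_of_abs_exp_mul_sub_le hq).trans_eq (by ring)
  have hUs : Uop μ u (s + t₁) (fun _ => 1) ≤ fun x =>
      exp (-(lam * s)) * κ * phi x * B + exp (-(lam * s)) * (C₀ * exp (-(γ * s))) * Z :=
    (hcont _ (add_pos hs ht₁)).le_of_ae_le (by fun_prop)
      (ae_Uop_one_le hu0 hu hCK hs ht₁ hphi0 hpsi (by positivity) (by positivity) hbound
        (weightedMass_lt_top (hu t₁ ht₁) hpsi_le hZ) hZ)
  have hlam : exp (-(lam * s)) = exp (-(lam * (s + t₁))) * exp (lam * t₁) := by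
    rw [← exp_add]; ring_nf
  have hγ : exp (-(γ * s)) ≤ phi x * exp (γ * t₁) := by
    rw [show -(γ * s) = -(γ * (s + t₁)) + γ * t₁ by ring, exp_add]; gcongr
  calc Uop μ u (s + t₁) (fun _ => 1) x
      ≤ exp (-(lam * s)) * κ * phi x * B + exp (-(lam * s)) * (C₀ * exp (-(γ * s))) * Z := hUs x
    _ ≤ exp (-(lam * s)) * κ * phi x * B
          + exp (-(lam * s)) * (C₀ * (phi x * exp (γ * t₁))) * Z := by gcongr
    _ = exp (lam * t₁) * (κ * B + C₀ * exp (γ * t₁) * Z) * exp (-(lam * (s + t₁))) * phi x := by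
        rw [hlam]; ring
    _ ≤ _ := by have := hphi0 x; gcongr; linarith

lemma ChapmanKolmogorov.transposeKernel (hCK : ChapmanKolmogorov μ u) :
    ChapmanKolmogorov μ (transposeKernel u) := by
  intro s t hs ht x y
  simp only [_root_.transposeKernel, add_comm s t, hCK t s ht hs y x, mul_comm]

lemma heatContent_transposeKernel [SFinite μ] {t : ℝ}
    (hu : Measurable (Function.uncurry (u t))) :
    heatContent μ (transposeKernel u) t = heatContent μ u t :=
  lintegral_lintegral_swap (hu.comp measurable_swap).ennreal_ofReal.aemeasurable

end Kernel

theorem statement10_general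
    [TopologicalSpace M]
    [MeasurableSpace M] [BorelSpace M]
    (μ : Measure M) [Measure.IsOpenPosMeasure μ] [SigmaFinite μ]
    (u : ℝ → M → M → ℝ)
    (hu_nonneg : ∀ t, 0 < t → ∀ x y, 0 ≤ u t x y)
    (hu_meas : ∀ t, 0 < t → Measurable (Function.uncurry (u t)))
    (hCK : ∀ s t : ℝ, 0 < s → 0 < t → ∀ x y,
      u (s + t) x y = ∫ z, u s x z * u t z y ∂μ)
    (t₀ : ℝ) (ht₀ : 0 < t₀)
    (hA2 : ∀ t, 0 < t → ∀ f : M → ℝ, Measurable f → (∃ C, ∀ x, |f x| ≤ C) →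
      Continuous (Uop μ u t f) ∧ (∃ C, ∀ x, |Uop μ u t f x| ≤ C) ∧
      Continuous (Ustar μ u t f) ∧ (∃ C, ∀ x, |Ustar μ u t f x| ≤ C))
    (lam : ℝ) (phi psi : M → ℝ)
    (hphi_cont : Continuous phi) (hphi_bdd : ∃ C, ∀ x, |phi x| ≤ C)
    (hphi_pos : ∀ x, 0 < phi x)
    (hpsi_cont : Continuous psi) (hpsi_bdd : ∃ C, ∀ x, |psi x| ≤ C)
    (hpsi_pos : ∀ x, 0 < psi x)
    (hLam_pos : 0 < ∫ x, phi x * psi x ∂μ)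
    (C₀ γ : ℝ) (hC₀ : 0 < C₀)
    (hgap : ∀ t, 2 * t₀ < t → ∀ᵐ q ∂(μ.prod μ),
      |Real.exp (lam * t) * u t q.1 q.2 -
        (∫ x, phi x * psi x ∂μ)⁻¹ * (phi q.1 * psi q.2)| ≤ C₀ * Real.exp (-(γ * t)))
    (K : ℝ → Set M)
    (ttil : ℝ) (η : ℝ → ℝ)
    (hη_ineq : ∀ t, ttil ≤ t →
      1 ≤ Real.exp (γ * t) * min (sInf (phi '' K (η t))) (sInf (psi '' K (η t))))
    (t₁ : ℝ) (ht₁ : t₀ ≤ t₁)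
    (hZ : heatContent μ u t₁ < ⊤) :
    ∃ C : ℝ, 0 < C ∧ ∃ T : ℝ, ∀ t, T ≤ t → ∀ x ∈ K (η t),
      Uop μ u t (fun _ => (1 : ℝ)) x ≤ C * Real.exp (-(lam * t)) * phi x ∧
      Ustar μ u t (fun _ => (1 : ℝ)) x ≤ C * Real.exp (-(lam * t)) * psi x := by
  obtain ⟨Cφ, hCφ⟩ := hphi_bdd
  obtain ⟨Cψ, hCψ⟩ := hpsi_bdd
  have ht₁0 : 0 < t₁ := ht₀.trans_le ht₁
  have hFeller t (ht : 0 < t) := hA2 t ht (fun _ => 1) measurable_const ⟨1, by simp⟩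
  obtain ⟨C₁, hC₁, T₁, hU⟩ := exists_Uop_one_le_of_spectral_gap hu_nonneg hu_meas hCK
    (fun t ht => (hFeller t ht).1) hphi_cont (fun x => (hphi_pos x).le) hpsi_cont.measurable
    (fun x => (le_abs_self _).trans (hCψ x)) (inv_pos.2 hLam_pos).le hC₀.le hgap ht₁0 hZ
  obtain ⟨C₂, hC₂, T₂, hUstar⟩ := exists_Uop_one_le_of_spectral_gap (u := transposeKernel u)
    (fun t ht x y => hu_nonneg t ht y x) (fun t ht => (hu_meas t ht).comp measurable_swap)
    (ChapmanKolmogorov.transposeKernel hCK) (fun t ht => (hFeller t ht).2.2.1) hpsi_cont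
    (fun x => (hpsi_pos x).le) hphi_cont.measurable (fun x => (le_abs_self _).trans (hCφ x))
    (inv_pos.2 hLam_pos).le hC₀.le
    (fun t ht => (ae_swap_of_ae_prod (hgap t ht)).mono fun q hq => by
      simpa only [transposeKernel, Prod.fst_swap, Prod.snd_swap, mul_comm (phi _)] using hq)
    ht₁0 ((heatContent_transposeKernel (hu_meas t₁ ht₁0)).trans_lt hZ)
  refine ⟨max C₁ C₂, lt_max_of_lt_left hC₁, max ttil (max T₁ T₂), fun t ht x hx => ?_⟩
  have hη := hη_ineq t (le_of_max_le_left ht)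
  have hphi_x : exp (-(γ * t)) ≤ phi x := exp_neg (γ * t) ▸
    inv_le_of_one_le_mul_csInf_image (exp_pos _) (fun x => (hphi_pos x).le)
      (hη.trans (by gcongr; exact min_le_left _ _)) hx
  have hpsi_x : exp (-(γ * t)) ≤ psi x := exp_neg (γ * t) ▸
    inv_le_of_one_le_mul_csInf_image (exp_pos _) (fun x => (hpsi_pos x).le)
      (hη.trans (by gcongr; exact min_le_right _ _)) hx
  have hT : T₁ ≤ t ∧ T₂ ≤ t := max_le_iff.1 (le_of_max_le_right ht)
  exact ⟨(hU t hT.1 x hphi_x).trans (by have := hphi_pos x; gcongr; exact le_max_left _ _),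
    (hUstar t hT.2 x hpsi_x).trans (by have := hpsi_pos x; gcongr; exact le_max_right _ _)⟩

/-- On a noncompact space, finite heat content implies that both
semigroups are pGSD for the exhausting family `{K_(η(t))}`. -/
theorem statement10
    [TopologicalSpace M] [PolishSpace M] [LocallyCompactSpace M]
    [MeasurableSpace M] [BorelSpace M]
    (μ : Measure M) [IsLocallyFiniteMeasure μ] [Measure.IsOpenPosMeasure μ] [SigmaFinite μ]
    (hnc : ¬ CompactSpace M)
    (u : ℝ → M → M → ℝ)
    (hu_nonneg : ∀ t, 0 < t → ∀ x y, 0 ≤ u t x y)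
    (hu_meas : ∀ t, 0 < t → Measurable (Function.uncurry (u t)))
    (hCK : ∀ s t : ℝ, 0 < s → 0 < t → ∀ x y,
      u (s + t) x y = ∫ z, u s x z * u t z y ∂μ)
    (t₀ : ℝ) (ht₀ : 0 < t₀)
    (hA2 : ∀ t, 0 < t → ∀ f : M → ℝ, Measurable f → (∃ C, ∀ x, |f x| ≤ C) →
      Continuous (Uop μ u t f) ∧ (∃ C, ∀ x, |Uop μ u t f x| ≤ C) ∧
      Continuous (Ustar μ u t f) ∧ (∃ C, ∀ x, |Ustar μ u t f x| ≤ C))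
    (hA3 : (∃ C, ∀ᵐ x ∂μ, ∫ y, (u t₀ x y) ^ 2 ∂μ ≤ C) ∧
      (∃ C, ∀ᵐ y ∂μ, ∫ x, (u t₀ x y) ^ 2 ∂μ ≤ C))
    (lam : ℝ) (phi psi : M → ℝ)
    (hphi_cont : Continuous phi) (hphi_bdd : ∃ C, ∀ x, |phi x| ≤ C)
    (hphi_L2 : MemLp phi 2 μ) (hphi_pos : ∀ x, 0 < phi x)
    (hpsi_cont : Continuous psi) (hpsi_bdd : ∃ C, ∀ x, |psi x| ≤ C)
    (hpsi_L2 : MemLp psi 2 μ) (hpsi_pos : ∀ x, 0 < psi x)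
    (hphi_eig : ∀ t, 0 < t → ∀ x, Uop μ u t phi x = Real.exp (-(lam * t)) * phi x)
    (hpsi_eig : ∀ t, 0 < t → ∀ y, Ustar μ u t psi y = Real.exp (-(lam * t)) * psi y)
    (hLam_int : Integrable (fun x => phi x * psi x) μ)
    (hLam_pos : 0 < ∫ x, phi x * psi x ∂μ)
    (C₀ γ : ℝ) (hC₀ : 0 < C₀) (hγ : 0 < γ)
    (hgap : ∀ t, 2 * t₀ < t → ∀ᵐ q ∂(μ.prod μ),
      |Real.exp (lam * t) * u t q.1 q.2 -
        (∫ x, phi x * psi x ∂μ)⁻¹ * (phi q.1 * psi q.2)| ≤ C₀ * Real.exp (-(γ * t)))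
    (K : ℝ → Set M) (hK : ExhaustingFamily t₀ K)
    (ttil : ℝ) (η : ℝ → ℝ)
    (hη_cod : ∀ t, ttil ≤ t → t₀ ≤ η t)
    (hη_mono : ∀ s t, ttil ≤ s → s ≤ t → η s ≤ η t)
    (hη_tendsto : Tendsto η atTop atTop)
    (hη_ineq : ∀ t, ttil ≤ t →
      1 ≤ Real.exp (γ * t) * min (sInf (phi '' K (η t))) (sInf (psi '' K (η t))))
    (t₁ : ℝ) (ht₁ : t₀ ≤ t₁)
    (hZ : heatContent μ u t₁ < ⊤) :
    ∃ C : ℝ, 0 < C ∧ ∃ T : ℝ, ∀ t, T ≤ t → ∀ x ∈ K (η t),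
      Uop μ u t (fun _ => (1 : ℝ)) x ≤ C * Real.exp (-(lam * t)) * phi x ∧
      Ustar μ u t (fun _ => (1 : ℝ)) x ≤ C * Real.exp (-(lam * t)) * psi x :=
  statement10_general μ u hu_nonneg hu_meas hCK t₀ ht₀ hA2 lam phi psi hphi_cont hphi_bdd hphi_pos
    hpsi_cont hpsi_bdd hpsi_pos hLam_pos C₀ γ hC₀ hgap K ttil η hη_ineq t₁ ht₁ hZ
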